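/- arXiv:math/0609192 — 3 statements merged into one kernel-verified Lean document; each statement's English description precedes it below -/
import Mathlib

section
/- Let T be a minimal, uniquely ergodic interval exchange transformation on a bounded interval I (with Lebesgue measure μ), and suppose f : I → ℂ is a non-constant differentiable eigenfunction of U_T (f ∘ T = λ f with |λ| = 1) whose derivative lies in L²(I, μ). Then f has the form f(x) = A·exp(C x) for complex constants A ≠ 0 and C purely imaginary, and the translation lengths δ_i of T all lie in a 2-dimensional ℚ-vector subspace of ℝ; in particular T has ℚ-rank 2. -/
/-!
Unique ergodicity makes every measurable function `g` with `g ∘ T = g` on `[0, r)` a.e. constant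
there. Applied to the continuous function `‖f‖` this shows that `‖f‖` is a nonzero constant.
Differentiating `f ∘ T = λ f` from the right inside each exchanged interval gives
`f' ∘ T = λ f'`, so the logarithmic derivative `f' / f` is invariant as well, hence `f' = C f`
a.e.; then `exp (-C x) f x` is everywhere differentiable with a.e. vanishing derivative, so it
is constant and `f = A exp (C x)`. Constancy of `‖f‖` forces `Re C = 0`, and evaluating
`f ∘ T = λ f` at the left end of the `i`-th interval gives `exp (C δᵢ) = λ`, so every `δᵢ` lies
in `arg λ / Im C + ℤ • (2π / Im C)`.
-/

open Set Complex MeasureTheory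

section Ergodic

variable {α : Type*} [MeasurableSpace α]

def IsUniqueInvariantOn (T : α → α) (I : Set α) (μ : Measure α) : Prop :=
  ∀ ν : Measure α, IsProbabilityMeasure ν → ν Iᶜ = 0 →
    (∀ s : Set α, MeasurableSet s → ν (T ⁻¹' s) = ν s) → ν = μ

open ProbabilityTheory in
theorem IsUniqueInvariantOn.preErgodic {T S : α → α} {I : Set α} {μ : Measure α}
    [IsProbabilityMeasure μ] (huniq : IsUniqueInvariantOn T I μ) (hμI : μ Iᶜ = 0)
    (hμT : ∀ s : Set α, MeasurableSet s → μ (T ⁻¹' s) = μ s) (hST : EqOn S T I) :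
    PreErgodic S μ := by
  refine ⟨fun s hs hSs => Filter.eventuallyConst_set'.2 ?_⟩
  rw [ae_eq_empty, ae_eq_univ, prob_compl_eq_zero_iff hs]
  refine or_iff_not_imp_left.2 fun hs0 => ?_
  have hmem : ∀ x ∈ I, T x ∈ s ↔ x ∈ s := fun x hx => by
    rw [← hST hx, ← mem_preimage, hSs]
  have hcond : ∀ B : Set α, MeasurableSet B → μ[T ⁻¹' B | s] = μ[B | s] := by
    intro B hB
    have hI : s ∩ T ⁻¹' B ∩ I = T ⁻¹' (s ∩ B) ∩ I := by
      ext x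
      by_cases hxI : x ∈ I <;> simp [hxI, hmem]
    rw [cond_apply hs, cond_apply hs]
    congr 1
    rw [← measure_inter_conull hμI, hI, measure_inter_conull hμI, hμT _ (hs.inter hB)]
  have := huniq _ (cond_isProbabilityMeasure hs0) (cond_absolutelyContinuous hμI) hcond
  rw [← this, cond_apply_self hs0 (measure_ne_top μ s)]

end Ergodic

theorem deriv_eq_of_eqOn_Ico {E : Type*} [NormedAddCommGroup E] [NormedSpace ℝ E] {φ ψ : ℝ → E}
    {x b : ℝ} (hxb : x < b) (hφ : DifferentiableAt ℝ φ x) (hψ : DifferentiableAt ℝ ψ x)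
    (h : EqOn φ ψ (Ico x b)) : deriv φ x = deriv ψ x :=
  (uniqueDiffOn_Ico x b x ⟨le_rfl, hxb⟩).eq_deriv _
    (hφ.hasDerivAt.hasDerivWithinAt.congr_of_mem h.symm ⟨le_rfl, hxb⟩)
    hψ.hasDerivAt.hasDerivWithinAt

theorem eq_mul_cexp_of_ae_deriv_eq {f : ℝ → ℂ} {c : ℂ} {a x : ℝ} (hf : Differentiable ℝ f)
    (hax : a ≤ x) (h : ∀ᵐ t ∂volume.restrict (Ioc a x), deriv f t = c * f t) :
    f x = f a * cexp (c * (x - a)) := by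
  set ψ : ℝ → ℂ := fun t => cexp (-(c * t)) * f t
  set ψ' : ℝ → ℂ := fun t => cexp (-(c * t)) * (deriv f t - c * f t)
  have hψ : ∀ t, HasDerivAt ψ (ψ' t) t := fun t => by
    have he : HasDerivAt (fun s : ℝ => cexp (-(c * s))) (cexp (-(c * t)) * -(c * 1)) t :=
      ((hasDerivAt_id t).ofReal_comp.const_mul c).neg.cexp
    exact (he.mul (hf t).hasDerivAt).congr_deriv (by simp only [ψ']; ring)
  have hψ'0 : ψ' =ᵐ[volume.restrict (Ioc a x)] 0 := h.mono fun t ht => by simp [ψ', ht]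
  have hint : IntervalIntegrable ψ' volume a x := by
    rw [intervalIntegrable_iff_integrableOn_Ioc_of_le hax]
    exact (integrable_zero _ _ _).congr hψ'0.symm
  have hconst := intervalIntegral.integral_eq_sub_of_hasDerivAt (fun t _ => hψ t) hint
  rw [intervalIntegral.integral_of_le hax, integral_eq_zero_of_ae hψ'0, eq_comm,
    sub_eq_zero] at hconst
  calc f x = cexp (c * x) * ψ x := by simp only [ψ]; rw [← mul_assoc, ← Complex.exp_add]; simp
    _ = f a * cexp (c * (x - a)) := by
      rw [hconst, mul_sub, sub_eq_add_neg, Complex.exp_add]; simp only [ψ]; ring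

theorem exists_submodule_rank_le_two {c : ℂ} (hc : c.im ≠ 0) (lam : ℂ) :
    ∃ V : Submodule ℚ ℝ, Module.rank ℚ V ≤ 2 ∧ ∀ x : ℝ, cexp (c * x) = lam → x ∈ V := by
  refine ⟨Submodule.span ℚ {arg lam / c.im, 2 * Real.pi / c.im},
    (rank_span_le _).trans (Cardinal.mk_insert_le.trans (by norm_num)), fun x hx => ?_⟩
  have hlam : lam ≠ 0 := hx ▸ Complex.exp_ne_zero _
  obtain ⟨n, hn⟩ := Complex.exp_eq_exp_iff_exists_int.1 (hx.trans (Complex.exp_log hlam).symm)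
  have him : c.im * x = arg lam + n * (2 * Real.pi) := by
    simpa [Complex.log_im] using congrArg Complex.im hn
  have hx' : x = arg lam / c.im + n • (2 * Real.pi / c.im) := by
    rw [zsmul_eq_mul]
    field_simp
    linarith
  rw [hx']
  exact add_mem (Submodule.subset_span (by simp))
    (zsmul_mem (Submodule.subset_span (by simp)) n)

theorem volume_preimage_inter_biUnion {ι : Type*} {S : Finset ι} {P : ι → Set ℝ} {d : ι → ℝ}
    {T : ℝ → ℝ} (hP : ∀ i ∈ S, MeasurableSet (P i)) (hdisj : (S : Set ι).PairwiseDisjoint P)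
    (hT : ∀ i ∈ S, ∀ x ∈ P i, T x = x + d i) (hinj : InjOn T (⋃ i ∈ S, P i))
    {s : Set ℝ} (hs : MeasurableSet s) :
    volume (T ⁻¹' s ∩ ⋃ i ∈ S, P i) = volume (s ∩ T '' ⋃ i ∈ S, P i) := by
  have hpiece : ∀ i ∈ S, T ⁻¹' s ∩ P i = (· + d i) ⁻¹' (s ∩ T '' P i) := by
    intro i hi
    rw [image_congr (hT i hi), preimage_inter,
      preimage_image_eq _ (add_left_injective (d i))]
    ext x
    simp only [mem_inter_iff, mem_preimage]
    exact ⟨fun h => ⟨hT i hi x h.2 ▸ h.1, h.2⟩, fun h => ⟨(hT i hi x h.2).symm ▸ h.1, h.2⟩⟩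
  have hmeas : ∀ i ∈ S, MeasurableSet (T '' P i) := by
    intro i hi
    rw [image_congr (hT i hi), image_add_right]
    exact measurable_add_const _ (hP i hi)
  rw [inter_iUnion₂, image_iUnion₂, inter_iUnion₂, measure_biUnion_finset, measure_biUnion_finset]
  · refine Finset.sum_congr rfl fun i hi => ?_
    rw [hpiece i hi, measure_preimage_add_right]
  · intro i hi j hj hij
    exact ((hdisj hi hj hij).image hinj (subset_biUnion_of_mem hi)
      (subset_biUnion_of_mem hj)).mono inter_subset_right inter_subset_right
  · exact fun i hi => hs.inter (hmeas i hi)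
  · intro i hi j hj hij
    exact (hdisj hi hj hij).mono inter_subset_right inter_subset_right
  · intro i hi
    rw [hpiece i hi]
    exact measurable_add_const _ (hs.inter (hmeas i hi))

structure IsIntervalExchange (r : ℝ) (m : ℕ) (a δ : ℕ → ℝ) (T : ℝ → ℝ) : Prop where
  zero : a 0 = 0
  last : a m = r
  lt_succ : ∀ i < m, a i < a (i + 1)
  eq_add : ∀ i < m, ∀ x ∈ Ico (a i) (a (i + 1)), T x = x + δ (i + 1)
  bijOn : BijOn T (Ico 0 r) (Ico 0 r)

namespace IsIntervalExchange

variable {r : ℝ} {m : ℕ} {a δ : ℕ → ℝ} {T : ℝ → ℝ}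

theorem monotoneOn (h : IsIntervalExchange r m a δ T) : MonotoneOn a (Iic m) :=
  (strictMonoOn_Iic_of_lt_succ fun i hi => by simpa using h.lt_succ i hi).monotoneOn

theorem Ico_subset (h : IsIntervalExchange r m a δ T) {i : ℕ} (hi : i < m) :
    Ico (a i) (a (i + 1)) ⊆ Ico 0 r := by
  rw [← h.zero, ← h.last]
  exact Ico_subset_Ico (h.monotoneOn (by simp) (by simp [hi.le]) (Nat.zero_le i))
    (h.monotoneOn (by simp [hi]) (by simp) hi)

theorem biUnion_Ico (h : IsIntervalExchange r m a δ T) :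
    ⋃ i ∈ Finset.range m, Ico (a i) (a (i + 1)) = Ico 0 r :=
  Subset.antisymm (iUnion₂_subset fun _ hi => h.Ico_subset (Finset.mem_range.1 hi))
    (by simpa [h.zero, h.last] using Ico_subset_biUnion_Ico m a)

theorem pairwiseDisjoint (h : IsIntervalExchange r m a δ T) :
    (Finset.range m : Set ℕ).PairwiseDisjoint fun i => Ico (a i) (a (i + 1)) := by
  intro i hi j hj hij
  wlog hlt : i < j generalizing i j
  · exact (this hj hi hij.symm (lt_of_le_of_ne (not_lt.1 hlt) hij.symm)).symm
  have hj : j < m := by simpa using hj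
  exact Ico_disjoint_Ico_same.mono_left
    (Ico_subset_Ico_right (h.monotoneOn (mem_Iic.2 (by omega)) (mem_Iic.2 hj.le) hlt))

theorem exists_mem_Ico (h : IsIntervalExchange r m a δ T) {x : ℝ} (hx : x ∈ Ico 0 r) :
    ∃ i < m, x ∈ Ico (a i) (a (i + 1)) := by
  rw [← h.biUnion_Ico] at hx
  simpa only [mem_iUnion, Finset.mem_range, exists_prop] using hx

theorem volume_preimage_inter (h : IsIntervalExchange r m a δ T) {s : Set ℝ}
    (hs : MeasurableSet s) : volume (T ⁻¹' s ∩ Ico 0 r) = volume (s ∩ Ico 0 r) := by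
  have := volume_preimage_inter_biUnion (S := Finset.range m) (fun _ _ => measurableSet_Ico)
    h.pairwiseDisjoint (fun i hi => h.eq_add i (Finset.mem_range.1 hi))
    (h.biUnion_Ico ▸ h.bijOn.injOn) hs
  rwa [h.biUnion_Ico, h.bijOn.image_eq] at this

theorem exists_ae_eq_const (h : IsIntervalExchange r m a δ T) (hr : 0 < r)
    (huniq : IsUniqueInvariantOn T (Ico 0 r) ((ENNReal.ofReal r)⁻¹ • volume.restrict (Ico 0 r)))
    {X : Type*} [Nonempty X] [MeasurableSpace X] [MeasurableSpace.CountablySeparated X]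
    {g : ℝ → X} (hg : Measurable g) (hgT : ∀ x ∈ Ico 0 r, g (T x) = g x) :
    ∃ c, ∀ᵐ x ∂volume.restrict (Ico 0 r), g x = c := by
  set μ := (ENNReal.ofReal r)⁻¹ • volume.restrict (Ico (0 : ℝ) r)
  have hμ : ∀ s, μ s = (ENNReal.ofReal r)⁻¹ * volume (s ∩ Ico 0 r) := fun s => by
    rw [Measure.smul_apply, Measure.restrict_apply' measurableSet_Ico, smul_eq_mul]
  have hr' : ENNReal.ofReal r ≠ 0 := ENNReal.ofReal_ne_zero_iff.2 hr
  have : IsProbabilityMeasure μ := ⟨by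
    rw [hμ, univ_inter, Real.volume_Ico, sub_zero,
      ENNReal.inv_mul_cancel hr' ENNReal.ofReal_ne_top]⟩
  have hpre : PreErgodic ((Ico 0 r).piecewise T id) μ :=
    huniq.preErgodic (by rw [hμ, compl_inter_self, measure_empty, mul_zero])
      (fun s hs => by rw [hμ, hμ, h.volume_preimage_inter hs])
      fun x hx => piecewise_eq_of_mem _ _ _ hx
  -- `T` is arbitrary off `[0, r)`; extended by the identity there, it leaves `g` invariant.
  have hgT' : g ∘ (Ico 0 r).piecewise T id = g := by
    ext x
    by_cases hx : x ∈ Ico 0 r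
    · simp [hx, hgT x hx]
    · simp [hx]
  obtain ⟨c, hc⟩ := hpre.ae_eq_const_of_ae_eq_comp hg hgT'
  exact ⟨c, (Measure.ae_ennreal_smul_measure_iff
    (ENNReal.inv_ne_zero.2 ENNReal.ofReal_ne_top)).1 hc⟩

theorem deriv_apply_eq_mul (h : IsIntervalExchange r m a δ T) {f : ℝ → ℂ} (hf : Differentiable ℝ f)
    {lam : ℂ} (heig : ∀ x ∈ Ico 0 r, f (T x) = lam * f x) {x : ℝ} (hx : x ∈ Ico 0 r) :
    deriv f (T x) = lam * deriv f x := by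
  obtain ⟨i, hi, hxi⟩ := h.exists_mem_Ico hx
  have heq : EqOn (fun y => f (y + δ (i + 1))) (fun y => lam * f y) (Ico x (a (i + 1))) := by
    intro y hy
    have hyi : y ∈ Ico (a i) (a (i + 1)) := ⟨hxi.1.trans hy.1, hy.2⟩
    dsimp only
    rw [← h.eq_add i hi y hyi, heig y (h.Ico_subset hi hyi)]
  rw [h.eq_add i hi x hxi, ← deriv_comp_add_const, ← deriv_const_mul _ (hf x)]
  exact deriv_eq_of_eqOn_Ico hxi.2 (hf.comp (differentiable_id.add_const _) x)
    ((hf x).const_mul lam) heq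

theorem cexp_mul_eq (h : IsIntervalExchange r m a δ T) {f : ℝ → ℂ} {A c lam : ℂ} (hA : A ≠ 0)
    (hform : ∀ x ∈ Ico 0 r, f x = A * cexp (c * x))
    (heig : ∀ x ∈ Ico 0 r, f (T x) = lam * f x) {i : ℕ} (hi : i < m) :
    cexp (c * δ (i + 1)) = lam := by
  have hxi : a i ∈ Ico (a i) (a (i + 1)) := ⟨le_rfl, h.lt_succ i hi⟩
  have hx : a i ∈ Ico 0 r := h.Ico_subset hi hxi
  have := heig _ hx
  rw [hform _ (h.bijOn.mapsTo hx), hform _ hx, h.eq_add i hi _ hxi] at this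
  push_cast at this
  rw [mul_add, Complex.exp_add] at this
  exact mul_left_cancel₀ (mul_ne_zero hA (Complex.exp_ne_zero (c * a i)))
    (by linear_combination this)

theorem norm_eq (h : IsIntervalExchange r m a δ T) (hr : 0 < r)
    (huniq : IsUniqueInvariantOn T (Ico 0 r) ((ENNReal.ofReal r)⁻¹ • volume.restrict (Ico 0 r)))
    {f : ℝ → ℂ} (hf : Continuous f) {lam : ℂ} (hlam : ‖lam‖ = 1)
    (heig : ∀ x ∈ Ico 0 r, f (T x) = lam * f x) {x : ℝ} (hx : x ∈ Ico 0 r) :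
    ‖f x‖ = ‖f 0‖ := by
  obtain ⟨K, hK⟩ := h.exists_ae_eq_const hr huniq hf.norm.measurable
    fun x hx => by rw [heig x hx, norm_mul, hlam, one_mul]
  have hEq := Measure.eqOn_Ico_of_ae_eq volume hK hf.norm.continuousOn continuousOn_const
  exact (hEq hx).trans (hEq ⟨le_rfl, hr⟩).symm

theorem exists_eq_mul_cexp (h : IsIntervalExchange r m a δ T) (hr : 0 < r)
    (huniq : IsUniqueInvariantOn T (Ico 0 r) ((ENNReal.ofReal r)⁻¹ • volume.restrict (Ico 0 r)))
    {f : ℝ → ℂ} (hf : Differentiable ℝ f) {lam : ℂ} (hlam : lam ≠ 0)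
    (heig : ∀ x ∈ Ico 0 r, f (T x) = lam * f x) (hf0 : ∀ x ∈ Ico 0 r, f x ≠ 0) :
    ∃ c : ℂ, ∀ x ∈ Ico 0 r, f x = f 0 * cexp (c * x) := by
  obtain ⟨c, hc⟩ := h.exists_ae_eq_const hr huniq (g := fun x => deriv f x / f x)
    ((measurable_deriv f).div hf.continuous.measurable) fun x hx => by
      rw [h.deriv_apply_eq_mul hf heig hx, heig x hx, mul_div_mul_left _ _ hlam]
  have hderiv : ∀ᵐ x ∂volume.restrict (Ico 0 r), deriv f x = c * f x := by
    filter_upwards [hc, ae_restrict_mem measurableSet_Ico] with x hx hxI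
    rw [← hx, div_mul_cancel₀ _ (hf0 x hxI)]
  refine ⟨c, fun x hx => ?_⟩
  simpa using eq_mul_cexp_of_ae_deriv_eq hf hx.1
    (ae_restrict_of_ae_restrict_of_subset
      (Ioc_subset_Icc_self.trans (Icc_subset_Ico_right hx.2)) hderiv)

end IsIntervalExchange

theorem stmt_1_general (r : ℝ) (hr : 0 < r) (m : ℕ)
    (a : ℕ → ℝ) (ha0 : a 0 = 0) (ham : a m = r) (hmono : ∀ i < m, a i < a (i + 1))
    (δ : ℕ → ℝ) (T : ℝ → ℝ)
    (hT : ∀ i < m, ∀ x ∈ Set.Ico (a i) (a (i + 1)), T x = x + δ (i + 1))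
    (hbij : Set.BijOn T (Set.Ico 0 r) (Set.Ico 0 r))
    -- unique ergodicity: normalized Lebesgue is the unique invariant probability
    (huniq : ∀ μ : Measure ℝ, IsProbabilityMeasure μ → μ (Set.Ico (0 : ℝ) r)ᶜ = 0 →
      (∀ s : Set ℝ, MeasurableSet s → μ (T ⁻¹' s) = μ s) →
      μ = (ENNReal.ofReal r)⁻¹ • volume.restrict (Set.Ico (0 : ℝ) r))
    (f : ℝ → ℂ) (hdiff : Differentiable ℝ f)
    (lam : ℂ) (hlam : ‖lam‖ = 1)
    (heig : ∀ x ∈ Set.Ico (0 : ℝ) r, f (T x) = lam * f x)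
    (hnc : ∃ x ∈ Set.Ico (0 : ℝ) r, ∃ y ∈ Set.Ico (0 : ℝ) r, f x ≠ f y) :
    (∃ (A C : ℂ), A ≠ 0 ∧ C.re = 0 ∧ ∀ x ∈ Set.Ico (0 : ℝ) r, f x = A * Complex.exp (C * x)) ∧
    ∃ V : Submodule ℚ ℝ, Module.rank ℚ V ≤ 2 ∧ ∀ i, 1 ≤ i → i ≤ m → δ i ∈ V := by
  have hIET : IsIntervalExchange r m a δ T := ⟨ha0, ham, hmono, hT, hbij⟩
  obtain ⟨x₀, hx₀, y₀, hy₀, hxy⟩ := hnc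
  have h0 : (0 : ℝ) ∈ Ico 0 r := ⟨le_rfl, hr⟩
  have hnorm : ∀ x ∈ Ico 0 r, ‖f x‖ = ‖f 0‖ := fun _ hx =>
    hIET.norm_eq hr huniq hdiff.continuous hlam heig hx
  have hf0 : ∀ x ∈ Ico 0 r, f x ≠ 0 := fun x hx hfx => by
    have hzero : ∀ y ∈ Ico 0 r, f y = 0 := fun y hy =>
      norm_eq_zero.1 (by rw [hnorm y hy, ← hnorm x hx, hfx, norm_zero])
    exact hxy ((hzero x₀ hx₀).trans (hzero y₀ hy₀).symm)
  obtain ⟨c, hform⟩ := hIET.exists_eq_mul_cexp hr huniq hdiff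
    (norm_ne_zero_iff.1 (hlam ▸ one_ne_zero)) heig hf0
  have hre : c.re = 0 := by
    have hr2 : r / 2 ∈ Ico 0 r := ⟨by positivity, by linarith⟩
    have := hnorm _ hr2
    rw [hform _ hr2, norm_mul, Complex.norm_exp, mul_eq_left₀ (norm_ne_zero_iff.2 (hf0 0 h0)),
      Real.exp_eq_one_iff] at this
    simpa [hr.ne'] using this
  have hc : c.im ≠ 0 := fun him => hxy <| by
    rw [hform x₀ hx₀, hform y₀ hy₀, show c = 0 from Complex.ext hre him]
    simp
  obtain ⟨V, hV, hδV⟩ := exists_submodule_rank_le_two hc lam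
  refine ⟨⟨f 0, c, hf0 0 h0, hre, hform⟩, V, hV, fun i hi him => ?_⟩
  obtain ⟨j, rfl⟩ := Nat.exists_eq_add_of_le' hi
  exact hδV _ (hIET.cexp_mul_eq (hf0 0 h0) hform heig (by omega))

/-- A minimal, uniquely ergodic IET with a non-constant differentiable
eigenfunction whose derivative is in L² must have eigenfunction of the form
`A·exp(C x)` with `C` purely imaginary, and the translation lengths lie in a
2-dimensional ℚ-vector subspace of ℝ (ℚ-rank 2). -/
theorem stmt_1 (r : ℝ) (hr : 0 < r) (m : ℕ) (hm : 0 < m)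
    (a : ℕ → ℝ) (ha0 : a 0 = 0) (ham : a m = r) (hmono : ∀ i < m, a i < a (i + 1))
    (δ : ℕ → ℝ) (T : ℝ → ℝ)
    (hT : ∀ i < m, ∀ x ∈ Set.Ico (a i) (a (i + 1)), T x = x + δ (i + 1))
    (hbij : Set.BijOn T (Set.Ico 0 r) (Set.Ico 0 r))
    -- minimality: every forward orbit is dense in [0, r)
    (hmin : ∀ x ∈ Set.Ico (0 : ℝ) r,
      Set.Ico (0 : ℝ) r ⊆ closure {y | ∃ n : ℕ, T^[n] x = y})
    -- unique ergodicity: normalized Lebesgue is the unique invariant probability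
    (huniq : ∀ μ : Measure ℝ, IsProbabilityMeasure μ → μ (Set.Ico (0 : ℝ) r)ᶜ = 0 →
      (∀ s : Set ℝ, MeasurableSet s → μ (T ⁻¹' s) = μ s) →
      μ = (ENNReal.ofReal r)⁻¹ • volume.restrict (Set.Ico (0 : ℝ) r))
    (f : ℝ → ℂ) (hdiff : Differentiable ℝ f)
    (hL2 : MemLp (deriv f) 2 (volume.restrict (Set.Ico (0 : ℝ) r)))
    (lam : ℂ) (hlam : ‖lam‖ = 1)
    (heig : ∀ x ∈ Set.Ico (0 : ℝ) r, f (T x) = lam * f x)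
    (hnc : ∃ x ∈ Set.Ico (0 : ℝ) r, ∃ y ∈ Set.Ico (0 : ℝ) r, f x ≠ f y) :
    (∃ (A C : ℂ), A ≠ 0 ∧ C.re = 0 ∧ ∀ x ∈ Set.Ico (0 : ℝ) r, f x = A * Complex.exp (C * x)) ∧
    ∃ V : Submodule ℚ ℝ, Module.rank ℚ V ≤ 2 ∧ ∀ i, 1 ≤ i → i ≤ m → δ i ∈ V :=
  stmt_1_general r hr m a ha0 ham hmono δ T hT hbij huniq f hdiff lam hlam heig hnc
end

section
/- Let n ≥ 1, σ an n-cycle of {1,...,n}, α ∈ (0,1) irrational, and T the 2n-interval exchange on [0,n) defined by T(x) = x + 1 − α + σ(i) − i for x ∈ [i−1, i−1+α) and T(x) = x − α + σ(i) − i for x ∈ [i−1+α, i). Then the first return map of T to [0,1) is the rotation x ↦ x + n(1−α) (mod 1), and T is minimal. -/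
/-!
Write a point of `[0, n)` as `i - 1 + t` with `i ∈ [1, n]` and `t ∈ [0, 1)`. On each unit
interval `T` is a rotation by `-α` followed by a jump to the interval of `σ i`, so
`T^[k] (i - 1 + t) = σ^[k] i - 1 + fract (t - k α)`. As `σ` is an `n`-cycle, the orbit of
`[0, 1)` first comes back after `n` steps, rotated by `-n α`. Moreover the times `k` at which
the orbit of `i - 1 + t` lies in the interval of any given `j` contain an arithmetic
progression `k₀ + n m`, and along it the fractional part is `fract (t - k₀ α - m (n α))`;
these are dense in `[0, 1)` because the forward multiples of the irrational `n α` are dense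
in `ℝ / ℤ`.
-/

open Function Set Int

section PeriodicOrbit

variable {β : Type*} {f : β → β} {x : β}

theorem mem_periodicPts_of_injOn_of_mapsTo {s : Set β} (hs : s.Finite) (hinj : InjOn f s)
    (hmaps : MapsTo f s s) (hx : x ∈ s) : x ∈ periodicPts f := by
  have : Finite s := hs.to_subtype
  obtain ⟨p, hp, hper⟩ := (hmaps.restrict_inj.mpr hinj).mem_periodicPts ⟨x, hx⟩
  refine ⟨p, hp, ?_⟩
  simpa [IsPeriodicPt, IsFixedPt, hmaps.iterate_restrict, Subtype.ext_iff] using hper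

theorem minimalPeriod_eq_card_of_orbit_eq [DecidableEq β] {s : Finset β}
    (hx : x ∈ periodicPts f) (hmaps : ∀ k, f^[k] x ∈ s) (hsurj : ∀ y ∈ s, ∃ k, f^[k] x = y) :
    minimalPeriod f x = s.card := by
  have himage : (Finset.range (minimalPeriod f x)).image (f^[·] x) = s := by
    ext y
    simp only [Finset.mem_image, Finset.mem_range]
    constructor
    · rintro ⟨k, -, rfl⟩
      exact hmaps k
    · intro hy
      obtain ⟨k, rfl⟩ := hsurj y hy
      exact ⟨k % minimalPeriod f x, Nat.mod_lt _ (minimalPeriod_pos_of_mem_periodicPts hx),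
        iterate_mod_minimalPeriod_eq⟩
  rw [← himage, Finset.card_image_of_injOn, Finset.card_range]
  simpa using iterate_injOn_Iio_minimalPeriod (f := f) (x := x)

theorem IsPeriodicPt.exists_iterate_add_mul_eq {p : ℕ} {y z : β} (hx : IsPeriodicPt f p x)
    (hp : 0 < p) (hy : ∃ a, f^[a] x = y) (hz : ∃ b, f^[b] x = z) :
    ∃ k₀, ∀ m, f^[k₀ + p * m] y = z := by
  obtain ⟨a, rfl⟩ := hy
  obtain ⟨b, rfl⟩ := hz
  obtain ⟨q, rfl⟩ : ∃ q, p = q + 1 := ⟨p - 1, by omega⟩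
  refine ⟨b + q * a, fun m => ?_⟩
  rw [← iterate_add_apply, show b + q * a + (q + 1) * m + a = b + (q + 1) * (a + m) by ring,
    iterate_add_apply, (hx.mul_const _).eq]

end PeriodicOrbit

theorem minimalPeriod_one_eq_of_bijOn_Icc {n : ℕ} {σ : ℕ → ℕ} (hn : 1 ≤ n)
    (hσ : BijOn σ (Icc 1 n) (Icc 1 n)) (hcyc : ∀ j ∈ Icc 1 n, ∃ k, σ^[k] 1 = j) :
    minimalPeriod σ 1 = n := by
  have h1 : 1 ∈ Icc 1 n := ⟨le_rfl, hn⟩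
  have hper := mem_periodicPts_of_injOn_of_mapsTo (finite_Icc 1 n) hσ.injOn hσ.mapsTo h1
  rw [minimalPeriod_eq_card_of_orbit_eq (s := Finset.Icc 1 n) hper, Nat.card_Icc,
    Nat.add_sub_cancel]
  · exact fun k => by simpa using hσ.mapsTo.iterate k h1
  · exact fun j hj => hcyc j (by simpa using hj)

theorem exists_nat_fract_sub_mul_mem_Ioo {β : ℝ} (hβ : Irrational β) (c : ℝ) {a b : ℝ}
    (ha : 0 ≤ a) (hab : a < b) (hb : b ≤ 1) : ∃ m : ℕ, fract (c - m * β) ∈ Ioo a b := by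
  have hdense : DenseRange (fun m : ℕ => m • (β : AddCircle (1 : ℝ))) :=
    denseRange_zsmul_iff_nsmul.mp (AddCircle.denseRange_zsmul_coe_iff.mpr (by simpa using hβ))
  have hU : IsOpen ((fun z => (c : AddCircle (1 : ℝ)) - z) ⁻¹' ((↑) '' Ioo a b)) :=
    (QuotientAddGroup.isOpenMap_coe _ isOpen_Ioo).preimage (by fun_prop)
  obtain ⟨m, u, hu, hum⟩ := hdense.exists_mem_open hU
    ⟨((c - (a + b) / 2 : ℝ) : AddCircle (1 : ℝ)), (a + b) / 2, ⟨by linarith, by linarith⟩,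
      by simp⟩
  obtain ⟨k, hk⟩ := AddSubgroup.mem_zmultiples_iff.mp (QuotientAddGroup.eq.mp
    (hum.trans (by simp : _ = ((c - m * β : ℝ) : AddCircle (1 : ℝ)))))
  refine ⟨m, ?_⟩
  rw [show c - m * β = u + k by rw [zsmul_one] at hk; linarith, fract_add_intCast,
    fract_eq_self.mpr ⟨ha.trans hu.1.le, hu.2.trans_le hb⟩]
  exact hu

theorem exists_mem_Icc_eq_sub_one_add_fract {n : ℕ} {x : ℝ} (hx : x ∈ Ico 0 (n : ℝ)) :
    ∃ i ∈ Icc 1 n, x = (i : ℝ) - 1 + fract x := by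
  refine ⟨⌊x⌋₊ + 1, ⟨le_add_self, (Nat.floor_lt hx.1).mpr hx.2⟩, ?_⟩
  rw [Nat.cast_succ, natCast_floor_eq_intCast_floor hx.1, add_sub_cancel_right,
    floor_add_fract]

def IsPermutedRotation (n : ℕ) (σ : ℕ → ℕ) (α : ℝ) (T : ℝ → ℝ) : Prop :=
  ∀ i ∈ Icc 1 n, ∀ x ∈ Ico ((i : ℝ) - 1) (i : ℝ),
    T x = if x < (i : ℝ) - 1 + α then x + 1 - α + (σ i : ℝ) - (i : ℝ)
      else x - α + (σ i : ℝ) - (i : ℝ)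

namespace IsPermutedRotation

variable {n : ℕ} {σ : ℕ → ℕ} {α : ℝ} {T : ℝ → ℝ}

theorem apply_sub_one_add (hT : IsPermutedRotation n σ α T) (hα : α ∈ Ioo 0 1) {i : ℕ}
    (hi : i ∈ Icc 1 n) {t : ℝ} (ht : t ∈ Ico 0 1) :
    T ((i : ℝ) - 1 + t) = (σ i : ℝ) - 1 + fract (t - α) := by
  obtain ⟨hα0, hα1⟩ := hα
  obtain ⟨ht0, ht1⟩ := ht
  rw [hT i hi _ ⟨by linarith, by linarith⟩]
  split_ifs with h
  · rw [(fract_eq_iff (b := t - α + 1)).mpr ⟨by linarith, by linarith, -1, by push_cast; ring⟩]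
    ring
  · rw [(fract_eq_iff (b := t - α)).mpr ⟨by linarith, by linarith, 0, by push_cast; ring⟩]
    ring

theorem iterate_sub_one_add (hT : IsPermutedRotation n σ α T) (hα : α ∈ Ioo 0 1)
    (hσ : MapsTo σ (Icc 1 n) (Icc 1 n)) (k : ℕ) {i : ℕ} (hi : i ∈ Icc 1 n) {t : ℝ}
    (ht : t ∈ Ico 0 1) :
    T^[k] ((i : ℝ) - 1 + t) = (σ^[k] i : ℝ) - 1 + fract (t - k * α) := by
  induction k with
  | zero => simp [fract_eq_self.mpr ht]
  | succ k ih =>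
    rw [iterate_succ_apply', ih, hT.apply_sub_one_add hα (hσ.iterate k hi)
      ⟨fract_nonneg _, fract_lt_one _⟩, iterate_succ_apply', fract_eq_fract.mpr]
    exact ⟨-⌊t - k * α⌋, by push_cast [fract]; ring⟩

theorem iterate_of_mem_Ico_zero_one (hT : IsPermutedRotation n σ α T) (hα : α ∈ Ioo 0 1)
    (hσ : MapsTo σ (Icc 1 n) (Icc 1 n)) (hn : 1 ≤ n) (k : ℕ) {x : ℝ} (hx : x ∈ Ico 0 1) :
    T^[k] x = (σ^[k] 1 : ℝ) - 1 + fract (x - k * α) := by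
  simpa using hT.iterate_sub_one_add hα hσ k ⟨le_rfl, hn⟩ hx

theorem iterate_mem_Ico_zero_one_iff (hT : IsPermutedRotation n σ α T) (hα : α ∈ Ioo 0 1)
    (hσ : MapsTo σ (Icc 1 n) (Icc 1 n)) (hn : 1 ≤ n) (k : ℕ) {x : ℝ} (hx : x ∈ Ico 0 1) :
    T^[k] x ∈ Ico 0 1 ↔ σ^[k] 1 = 1 := by
  rw [hT.iterate_of_mem_Ico_zero_one hα hσ hn k hx]
  have hk : 1 ≤ σ^[k] 1 := (hσ.iterate k ⟨le_rfl, hn⟩).1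
  have h0 := fract_nonneg (x - k * α)
  have h1 := fract_lt_one (x - k * α)
  constructor
  · rintro ⟨-, hlt⟩
    by_contra hne
    have : (2 : ℝ) ≤ σ^[k] 1 := by exact_mod_cast (by omega : 2 ≤ σ^[k] 1)
    linarith
  · intro heq
    rw [heq]
    constructor <;> push_cast <;> linarith

theorem mem_closure_orbit (hT : IsPermutedRotation n σ α T) (hα : α ∈ Ioo 0 1)
    (hirr : Irrational α) (hn : 1 ≤ n) (hσ : BijOn σ (Icc 1 n) (Icc 1 n))
    (hcyc : ∀ j ∈ Icc 1 n, ∃ k, σ^[k] 1 = j) {x y : ℝ} (hx : x ∈ Ico 0 (n : ℝ))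
    (hy : y ∈ Ico 0 (n : ℝ)) : y ∈ closure {z | ∃ k : ℕ, T^[k] x = z} := by
  obtain ⟨i, hi, hxi⟩ := exists_mem_Icc_eq_sub_one_add_fract hx
  obtain ⟨j, hj, hyj⟩ := exists_mem_Icc_eq_sub_one_add_fract hy
  have hper : IsPeriodicPt σ n 1 := by
    rw [← minimalPeriod_one_eq_of_bijOn_Icc hn hσ hcyc]
    exact isPeriodicPt_minimalPeriod σ 1
  obtain ⟨k₀, hk₀⟩ := IsPeriodicPt.exists_iterate_add_mul_eq hper hn (hcyc i hi) (hcyc j hj)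
  rw [Metric.mem_closure_iff]
  intro ε hε
  obtain ⟨m, hm⟩ := exists_nat_fract_sub_mul_mem_Ioo (hirr.natCast_mul (m := n) (by omega))
    (fract x - k₀ * α) (fract_nonneg y)
    (lt_min (lt_add_of_pos_right _ hε) (fract_lt_one y)) (min_le_right _ _)
  refine ⟨_, ⟨k₀ + n * m, rfl⟩, ?_⟩
  have hexp : fract x - ((k₀ + n * m : ℕ) : ℝ) * α = fract x - k₀ * α - m * (n * α) := by
    push_cast
    ring
  rw [hxi, hT.iterate_sub_one_add hα hσ.mapsTo _ hi ⟨fract_nonneg x, fract_lt_one x⟩, hk₀,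
    hexp, hyj, Real.dist_eq, abs_sub_lt_iff]
  have := min_le_left (fract y + ε) 1
  constructor <;> linarith [hm.1, hm.2]

end IsPermutedRotation

/-- If σ is an n-cycle, then the first return map of the
2n-interval exchange T of Section 4 to [0,1) is the rotation
x ↦ x + n(1-α) (mod 1), and T is minimal. -/
theorem stmt_13
    (n : ℕ) (hn : 1 ≤ n) (σ : ℕ → ℕ)
    (hσ : Set.BijOn σ (Set.Icc 1 n) (Set.Icc 1 n))
    (α : ℝ) (hα : α ∈ Set.Ioo (0 : ℝ) 1) (hirr : Irrational α)
    (T : ℝ → ℝ)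
    (hT : ∀ i ∈ Set.Icc 1 n, ∀ x ∈ Set.Ico ((i : ℝ) - 1) (i : ℝ),
      T x = if x < (i : ℝ) - 1 + α then x + 1 - α + (σ i : ℝ) - (i : ℝ)
            else x - α + (σ i : ℝ) - (i : ℝ))
    (hcyc : ∀ j ∈ Set.Icc 1 n, ∃ k : ℕ, σ^[k] 1 = j) :
    (∀ x ∈ Set.Ico (0 : ℝ) 1,
      (∀ k : ℕ, 1 ≤ k → k < n → T^[k] x ∉ Set.Ico (0 : ℝ) 1) ∧
      T^[n] x ∈ Set.Ico (0 : ℝ) 1 ∧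
      T^[n] x = Int.fract (x + (n : ℝ) * (1 - α))) ∧
    ∀ x ∈ Set.Ico (0 : ℝ) (n : ℝ),
      Set.Ico (0 : ℝ) (n : ℝ) ⊆ closure {y | ∃ k : ℕ, T^[k] x = y} := by
  have hT' : IsPermutedRotation n σ α T := hT
  have hper := minimalPeriod_one_eq_of_bijOn_Icc hn hσ hcyc
  have hreturn : σ^[n] 1 = 1 := hper ▸ iterate_minimalPeriod
  refine ⟨fun x hx => ⟨fun k hk1 hkn => ?_, ?_, ?_⟩,
    fun x hx y hy => hT'.mem_closure_orbit hα hirr hn hσ hcyc hx hy⟩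
  · rw [hT'.iterate_mem_Ico_zero_one_iff hα hσ.mapsTo hn k hx]
    exact not_isPeriodicPt_of_pos_of_lt_minimalPeriod (by omega) (hper ▸ hkn)
  · exact (hT'.iterate_mem_Ico_zero_one_iff hα hσ.mapsTo hn n hx).mpr hreturn
  · rw [hT'.iterate_of_mem_Ico_zero_one hα hσ.mapsTo hn n hx, hreturn,
      show x + n * (1 - α) = x - n * α + n by ring, fract_add_natCast]
    simp
end

section
/- Let n ≥ 1, σ an n-cycle of {1,...,n}, α ∈ (0,1) irrational, and T the 2n-interval exchange on [0,n) with T([i−1,i)) = [σ(i)−1, σ(i)) as defined by T(x) = x + 1 − α + σ(i) − i on [i−1, i−1+α) and T(x) = x − α + σ(i) − i on [i−1+α, i). For each i let k_i ∈ {0,...,n−1} be such that [i−1,i) = T^{k_i}([0,1)). Then the piecewise constant function φ(x) = exp(2πi k_i/n) for x ∈ [i−1,i) satisfies φ(T(x)) = exp(2πi/n) φ(x) for all x; hence exp(2πi/n) is a rational eigenvalue of U_T. -/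
/-!
`T` maps each unit interval `[i - 1, i)` onto `[σ i - 1, σ i)`, so `T^[m]` maps `[0, 1)` onto
`[σ^[m] 1 - 1, σ^[m] 1)`, and `k i` is the position of `i` in the orbit `1, σ 1, σ^[2] 1, …`.
Since `m ↦ σ^[m] 1` maps `{0, …, n - 1}` onto the `n` points `{1, …, n}`, it is a bijection and
the orbit has period `n`; hence `k (σ i) = (k i + 1) % n`, which is the eigenvalue equation.
-/

open Set Function
open scoped Finset

section OrbitIndex

variable {α : Type*} {f : α → α} {s : Finset α} {x : α} {k : α → ℕ}

lemma injOn_iterate_of_index (hx : x ∈ s) (hf : MapsTo f s s)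
    (hk : ∀ i ∈ s, k i < #s ∧ f^[k i] x = i) :
    InjOn (f^[·] x) (Finset.range #s) :=
  Finset.injOn_of_surjOn_of_card_le _ (fun m _ ↦ hf.iterate m hx)
    (fun i hi ↦ ⟨k i, Finset.mem_range.2 (hk i hi).1, (hk i hi).2⟩) (Finset.card_range _).le

lemma index_iterate_of_lt (hx : x ∈ s) (hf : MapsTo f s s)
    (hk : ∀ i ∈ s, k i < #s ∧ f^[k i] x = i) {m : ℕ} (hm : m < #s) :
    k (f^[m] x) = m :=
  have hfm : f^[m] x ∈ s := hf.iterate m hx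
  injOn_iterate_of_index hx hf hk (Finset.mem_range.2 (hk _ hfm).1) (Finset.mem_range.2 hm)
    (hk _ hfm).2

lemma isPeriodicPt_card_of_index (hx : x ∈ s) (hf : MapsTo f s s) (hinj : InjOn f s)
    (hk : ∀ i ∈ s, k i < #s ∧ f^[k i] x = i) :
    IsPeriodicPt f #s x := by
  have hpos : 0 < #s := Finset.card_pos.2 ⟨x, hx⟩
  obtain ⟨hj, hfj⟩ := hk _ (hf.iterate #s hx)
  rcases hj0 : k (f^[#s] x) with _ | j
  · rw [hj0] at hfj
    exact hfj.symm
  · -- cancel one application of `f` and compare positions `j` and `#s - 1` in the orbit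
    rw [hj0] at hfj hj
    rw [← Nat.sub_add_cancel hpos, iterate_succ_apply', iterate_succ_apply'] at hfj
    have := injOn_iterate_of_index hx hf hk (Finset.mem_range.2 (by omega))
      (Finset.mem_range.2 (by omega)) (hinj (hf.iterate _ hx) (hf.iterate _ hx) hfj)
    omega

lemma index_apply_eq_mod (hx : x ∈ s) (hf : MapsTo f s s) (hinj : InjOn f s)
    (hk : ∀ i ∈ s, k i < #s ∧ f^[k i] x = i) {i : α} (hi : i ∈ s) :
    k (f i) = (k i + 1) % #s :=
  calc k (f i) = k (f^[k i + 1] x) := by rw [iterate_succ_apply', (hk i hi).2]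
    _ = k (f^[(k i + 1) % #s] x) := by
      rw [(isPeriodicPt_card_of_index hx hf hinj hk).iterate_mod_apply]
    _ = (k i + 1) % #s :=
      index_iterate_of_lt hx hf hk (Nat.mod_lt _ (Finset.card_pos.2 ⟨x, hx⟩))

end OrbitIndex

lemma image_Ico_of_exchange (T : ℝ → ℝ) {p q α : ℝ} (hα₀ : 0 ≤ α) (hα₁ : α ≤ 1)
    (hT : ∀ x ∈ Ico (p - 1) p,
      T x = if x < p - 1 + α then x + 1 - α + q - p else x - α + q - p) :
    T '' Ico (p - 1) p = Ico (q - 1) q := by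
  ext y
  constructor
  · rintro ⟨x, hx, rfl⟩
    rw [hT x hx]
    split_ifs with h
    · exact ⟨by linarith [hx.1], by linarith⟩
    · exact ⟨by linarith [not_lt.1 h], by linarith [hx.2]⟩
  · rintro ⟨hy1, hy2⟩
    by_cases hy : q - α ≤ y
    · refine ⟨y - 1 + α - q + p, ⟨by linarith, by linarith⟩, ?_⟩
      rw [hT _ ⟨by linarith, by linarith⟩, if_pos (by linarith)]
      ring
    · refine ⟨y + α - q + p, ⟨by linarith, by linarith⟩, ?_⟩
      rw [hT _ ⟨by linarith, by linarith⟩, if_neg (by linarith)]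
      ring

lemma iterate_image_Ico_of_mapsTo {T : ℝ → ℝ} {σ : ℕ → ℕ} {s : Set ℕ} (hσ : MapsTo σ s s)
    (hT : ∀ i ∈ s, T '' Ico ((i : ℝ) - 1) i = Ico ((σ i : ℝ) - 1) (σ i)) (m : ℕ) :
    ∀ i ∈ s, T^[m] '' Ico ((i : ℝ) - 1) i = Ico ((σ^[m] i : ℝ) - 1) (σ^[m] i) := by
  induction m with
  | zero => simp
  | succ m ih =>
    intro i hi
    rw [iterate_succ, image_comp, hT i hi, ih (σ i) (hσ hi), iterate_succ_apply]

lemma Ico_natCast_sub_one_injective :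
    Injective fun i : ℕ ↦ Ico ((i : ℝ) - 1) i := by
  intro i j hij
  have := ((Set.Ico_eq_Ico_iff (Or.inl (by linarith))).1 hij).2
  exact_mod_cast this

lemma exists_mem_Ico_natCast_sub_one {n : ℕ} {x : ℝ} (hx : x ∈ Ico (0 : ℝ) n) :
    ∃ i ∈ Set.Icc 1 n, x ∈ Ico ((i : ℝ) - 1) i := by
  refine ⟨⌊x⌋₊ + 1, ⟨by omega, Nat.floor_lt hx.1 |>.2 hx.2⟩, ?_, ?_⟩
  · push_cast
    linarith [Nat.floor_le hx.1]
  · exact_mod_cast Nat.lt_floor_add_one x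

lemma Complex.exp_two_pi_mul_I_mul_mod_div (m n : ℕ) :
    Complex.exp (2 * Real.pi * Complex.I * ((m % n : ℕ) : ℂ) / n)
      = Complex.exp (2 * Real.pi * Complex.I * (m : ℂ) / n) := by
  rcases Nat.eq_zero_or_pos n with rfl | hn
  · simp
  have hn' : (n : ℂ) ≠ 0 := by exact_mod_cast hn.ne'
  conv_rhs => rw [← Nat.mod_add_div m n]
  rw [show 2 * Real.pi * Complex.I * ((m % n + n * (m / n) : ℕ) : ℂ) / n
      = 2 * Real.pi * Complex.I * ((m % n : ℕ) : ℂ) / n + (m / n : ℕ) * (2 * Real.pi * Complex.I)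
      by push_cast; field_simp,
    Complex.exp_add, Complex.exp_nat_mul_two_pi_mul_I, mul_one]

theorem stmt_16_general
    (n : ℕ) (hn : 1 ≤ n) (σ : ℕ → ℕ)
    (hσ : Set.BijOn σ (Set.Icc 1 n) (Set.Icc 1 n))
    (α : ℝ) (hα : α ∈ Set.Ioo (0 : ℝ) 1)
    (T : ℝ → ℝ)
    (hT : ∀ i ∈ Set.Icc 1 n, ∀ x ∈ Set.Ico ((i : ℝ) - 1) (i : ℝ),
      T x = if x < (i : ℝ) - 1 + α then x + 1 - α + (σ i : ℝ) - (i : ℝ)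
            else x - α + (σ i : ℝ) - (i : ℝ))
    (k : ℕ → ℕ)
    (hk : ∀ i ∈ Set.Icc 1 n, k i < n ∧
      Set.Ico ((i : ℝ) - 1) (i : ℝ) = T^[k i] '' Set.Ico (0 : ℝ) 1)
    (φ : ℝ → ℂ)
    (hφ : ∀ i ∈ Set.Icc 1 n, ∀ x ∈ Set.Ico ((i : ℝ) - 1) (i : ℝ),
      φ x = Complex.exp (2 * Real.pi * Complex.I * (k i : ℂ) / (n : ℂ))) :
    ∀ x ∈ Set.Ico (0 : ℝ) (n : ℝ),
      φ (T x) = Complex.exp (2 * Real.pi * Complex.I / (n : ℂ)) * φ x := by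
  intro x hx
  obtain ⟨i, hi, hxi⟩ := exists_mem_Ico_natCast_sub_one hx
  have himage (j) (hj : j ∈ Set.Icc 1 n) : T '' Ico ((j : ℝ) - 1) j = Ico ((σ j : ℝ) - 1) (σ j) :=
    image_Ico_of_exchange T hα.1.le hα.2.le (hT j hj)
  have hone : 1 ∈ Set.Icc 1 n := ⟨le_rfl, hn⟩
  have hindex : ∀ j ∈ Finset.Icc 1 n, k j < #(Finset.Icc 1 n) ∧ σ^[k j] 1 = j := by
    intro j hj
    rw [← Finset.mem_coe, Finset.coe_Icc] at hj
    refine ⟨by simpa using (hk j hj).1, Ico_natCast_sub_one_injective ?_⟩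
    beta_reduce
    rw [← iterate_image_Ico_of_mapsTo hσ.mapsTo himage _ 1 hone, (hk j hj).2]
    norm_num
  have hstep : k (σ i) = (k i + 1) % n := by
    simpa using index_apply_eq_mod (s := Finset.Icc 1 n) (by simpa using hone)
      (by simpa using hσ.mapsTo) (by simpa using hσ.injOn) hindex (by simpa using hi)
  have hTx : T x ∈ Ico ((σ i : ℝ) - 1) (σ i) := himage i hi ▸ mem_image_of_mem T hxi
  rw [hφ _ (hσ.mapsTo hi) _ hTx, hφ i hi x hxi, hstep,
    Complex.exp_two_pi_mul_I_mul_mod_div, ← Complex.exp_add]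
  congr 1
  push_cast
  ring

/-- Lemma 4.2 b: If σ is an n-cycle, writing
[i-1,i) = T^[k_i]([0,1)), the piecewise constant function
φ(x) = exp(2πi k_i/n) on [i-1,i) satisfies φ∘T = exp(2πi/n)·φ, so
exp(2πi/n) is a rational eigenvalue of U_T. -/
theorem stmt_16
    (n : ℕ) (hn : 1 ≤ n) (σ : ℕ → ℕ)
    (hσ : Set.BijOn σ (Set.Icc 1 n) (Set.Icc 1 n))
    (α : ℝ) (hα : α ∈ Set.Ioo (0 : ℝ) 1) (hirr : Irrational α)
    (T : ℝ → ℝ)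
    (hT : ∀ i ∈ Set.Icc 1 n, ∀ x ∈ Set.Ico ((i : ℝ) - 1) (i : ℝ),
      T x = if x < (i : ℝ) - 1 + α then x + 1 - α + (σ i : ℝ) - (i : ℝ)
            else x - α + (σ i : ℝ) - (i : ℝ))
    (hcyc : ∀ j ∈ Set.Icc 1 n, ∃ k : ℕ, σ^[k] 1 = j)
    (k : ℕ → ℕ)
    (hk : ∀ i ∈ Set.Icc 1 n, k i < n ∧
      Set.Ico ((i : ℝ) - 1) (i : ℝ) = T^[k i] '' Set.Ico (0 : ℝ) 1)
    (φ : ℝ → ℂ)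
    (hφ : ∀ i ∈ Set.Icc 1 n, ∀ x ∈ Set.Ico ((i : ℝ) - 1) (i : ℝ),
      φ x = Complex.exp (2 * Real.pi * Complex.I * (k i : ℂ) / (n : ℂ))) :
    ∀ x ∈ Set.Ico (0 : ℝ) (n : ℝ),
      φ (T x) = Complex.exp (2 * Real.pi * Complex.I / (n : ℂ)) * φ x :=
  stmt_16_general n hn σ hσ α hα T hT k hk φ hφ
end
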